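/- arXiv:1410.8096 — 2 statements merged into one kernel-verified Lean document; each statement's English description precedes it below -/
import Mathlib

section
/- Let p be a prime, d ≥ 4, and let B_D : Z_p^d × Z_p^d → Z_p^{d−1} be the bilinear map with B_D(u, v)_k = u_k v_{k+1} − u_{k+1} v_k for 1 ≤ k ≤ d − 2 and B_D(u, v)_{d−1} = u_{d−2} v_d − u_d v_{d−2}. Then the Jacobson radical J of the ring Adj(B_D) equals {(Q(x, y, z), −Q(x, y, z)) : x, y, z ∈ Z_p}, where Q(x, y, z) = x·E_{21} + y·E_{d−2,d−1} + z·E_{d−2,d}, and J² = 0. -/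
/-!
For each edge `{s, t}` of the Dynkin diagram `D_d` that indexes the coordinates of `B_D`, an
adjoint pair `(f, g)` satisfies `f i s = g i s = 0` for `i ∉ {s, t}`, `f s s = g t t` and
`g t s = -f t s`. Hence `f` and `g` vanish off the diagonal except at the three positions
(neighbour, leaf), where `g = -f`, and each diagonal entry `(f, g) ↦ f j j` is a ring homomorphism
onto `ℤ/p`. Its kernel is a maximal left ideal, so `J` lies in the intersection `N` of these
kernels. Conversely `N = {(Q, -Q)}` and `Q Q' = 0`, so `y x` squares to zero for `x ∈ N`, which
puts `N` inside `J`.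
-/

open Matrix MulOpposite

/-- The type-`D` bilinear map `B_D : ℤₚᵈ × ℤₚᵈ → ℤₚ^{d−1}`:
`B_D(u,v)_k = u_k v_{k+1} − u_{k+1} v_k` for `1 ≤ k ≤ d−2` and
`B_D(u,v)_{d−1} = u_{d−2} v_d − u_d v_{d−2}` (`0`-based indexing here). -/
def BDform (p d : ℕ) (u v : Fin d → ZMod p) : Fin (d - 1) → ZMod p :=
  fun k =>
    if (k : ℕ) < d - 2 then
      u ⟨(k : ℕ), by have := k.isLt; omega⟩ * v ⟨(k : ℕ) + 1, by have := k.isLt; omega⟩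
        - u ⟨(k : ℕ) + 1, by have := k.isLt; omega⟩ * v ⟨(k : ℕ), by have := k.isLt; omega⟩
    else
      u ⟨d - 3, by have := k.isLt; omega⟩ * v ⟨d - 1, by have := k.isLt; omega⟩
        - u ⟨d - 1, by have := k.isLt; omega⟩ * v ⟨d - 3, by have := k.isLt; omega⟩

theorem BDform_add_left (p d : ℕ) (u u' v : Fin d → ZMod p) :
    BDform p d (u + u') v = BDform p d u v + BDform p d u' v := by
  funext k; by_cases h : (k : ℕ) < d - 2 <;> simp [BDform, h] <;> ring

theorem BDform_add_right (p d : ℕ) (u v v' : Fin d → ZMod p) :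
    BDform p d u (v + v') = BDform p d u v + BDform p d u v' := by
  funext k; by_cases h : (k : ℕ) < d - 2 <;> simp [BDform, h] <;> ring

theorem BDform_neg_left (p d : ℕ) (u v : Fin d → ZMod p) :
    BDform p d (-u) v = -BDform p d u v := by
  funext k; by_cases h : (k : ℕ) < d - 2 <;> simp [BDform, h] <;> ring

theorem BDform_neg_right (p d : ℕ) (u v : Fin d → ZMod p) :
    BDform p d u (-v) = -BDform p d u v := by
  funext k; by_cases h : (k : ℕ) < d - 2 <;> simp [BDform, h] <;> ring

/-- The adjoint ring `Adj(B_D)` of the type-`D` bilinear map `B_D = BDform p d`, realized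
as a subring of `M_d(ℤₚ) × M_d(ℤₚ)ᵐᵒᵖ` (so that the multiplication is
`(f,g)·(f',g') = (f f', g' g)`), with matrices acting on row vectors on the right:
`(f, g) ∈ Adj(B_D)` iff `B_D(u f, v) = B_D(u, v g)` for all row vectors `u, v`. -/
def AdjDRing (p d : ℕ) :
    Subring (Matrix (Fin d) (Fin d) (ZMod p) × (Matrix (Fin d) (Fin d) (ZMod p))ᵐᵒᵖ) where
  carrier := {fg | ∀ u v : Fin d → ZMod p,
    BDform p d (u ᵥ* fg.1) v = BDform p d u (v ᵥ* fg.2.unop)}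
  zero_mem' := by
    intro u v
    simp only [Prod.fst_zero, Prod.snd_zero, unop_zero, Matrix.vecMul_zero]
    funext k; by_cases h : (k : ℕ) < d - 2 <;> simp [BDform, h]
  one_mem' := by intro u v; simp [Matrix.vecMul_one]
  add_mem' := by
    rintro a b ha hb u v
    simp only [Prod.fst_add, Prod.snd_add, unop_add, Matrix.vecMul_add]
    rw [BDform_add_left, BDform_add_right, ha u v, hb u v]
  neg_mem' := by
    rintro a ha u v
    simp only [Prod.fst_neg, Prod.snd_neg, unop_neg, Matrix.vecMul_neg]
    rw [BDform_neg_left, BDform_neg_right, ha u v]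
  mul_mem' := by
    rintro a b ha hb u v
    show BDform p d (u ᵥ* (a.1 * b.1)) v = BDform p d u (v ᵥ* (a.2 * b.2).unop)
    rw [unop_mul, ← Matrix.vecMul_vecMul, ← Matrix.vecMul_vecMul, hb, ha]

namespace Matrix

variable {n R : Type*} [Fintype n]

theorem mul_apply_of_row_eq_zero [NonUnitalNonAssocSemiring R] {A : Matrix n n R} {i : n}
    (h : ∀ k ≠ i, A i k = 0) (B : Matrix n n R) (j : n) : (A * B) i j = A i i * B i j :=
  mul_apply.trans <| Finset.sum_eq_single i (fun k _ hk => by rw [h k hk, zero_mul])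
    (fun hi => absurd (Finset.mem_univ i) hi)

theorem mul_apply_of_col_eq_zero [NonUnitalNonAssocSemiring R] (A : Matrix n n R)
    {B : Matrix n n R} {j : n} (h : ∀ k ≠ j, B k j = 0) (i : n) : (A * B) i j = A i j * B j j :=
  mul_apply.trans <| Finset.sum_eq_single j (fun k _ hk => by rw [h k hk, mul_zero])
    (fun hj => absurd (Finset.mem_univ j) hj)

/-- The adjoint condition for the coordinate `u s * v t - u t * v s` of a bilinear map. -/
def IsEdgeAdjoint [CommRing R] (f g : Matrix n n R) (s t : n) : Prop :=
  ∀ u v : n → R, (u ᵥ* f) s * v t - (u ᵥ* f) t * v s = u s * (v ᵥ* g) t - u t * (v ᵥ* g) s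

namespace IsEdgeAdjoint

variable [CommRing R] {f g : Matrix n n R} {s t : n}

theorem symm (h : IsEdgeAdjoint f g s t) : IsEdgeAdjoint f g t s :=
  fun u v => by linear_combination -h u v

variable [DecidableEq n]

theorem single (h : IsEdgeAdjoint f g s t) (i j : n) :
    f i s * (Pi.single j 1 : n → R) t - f i t * (Pi.single j 1 : n → R) s
      = (Pi.single i 1 : n → R) s * g j t - (Pi.single i 1 : n → R) t * g j s := by
  simpa using h (Pi.single i 1) (Pi.single j 1)

theorem left_apply_eq_zero (h : IsEdgeAdjoint f g s t) (hst : s ≠ t) {i : n} (hs : i ≠ s)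
    (ht : i ≠ t) : f i s = 0 := by
  simpa [hst, hst.symm, hs, ht] using h.single i t

theorem right_apply_eq_zero (h : IsEdgeAdjoint f g s t) (hst : s ≠ t) {j : n} (hs : j ≠ s)
    (ht : j ≠ t) : g j s = 0 := by
  simpa [hst, hst.symm, hs, ht] using h.single t j

theorem left_apply_diag (h : IsEdgeAdjoint f g s t) (hst : s ≠ t) : f s s = g t t := by
  simpa [hst, hst.symm] using h.single s t

theorem right_apply_eq_neg (h : IsEdgeAdjoint f g s t) (hst : s ≠ t) : g t s = -f t s := by
  have := h.single t t
  simp only [Pi.single_eq_same, Pi.single_eq_of_ne hst] at this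
  linear_combination this

end IsEdgeAdjoint

end Matrix

namespace Ideal

variable {R : Type*} [Ring R]

theorem jacobson_bot_le_ker {K : Type*} [DivisionRing K] (φ : R →+* K)
    (hφ : Function.Surjective φ) : jacobson (⊥ : Ideal R) ≤ RingHom.ker φ :=
  sInf_le ⟨bot_le, RingHom.ker_isMaximal_of_surjective φ hφ⟩

theorem mem_jacobson_bot_of_isNilpotent_mul {x : R} (h : ∀ y, IsNilpotent (y * x)) :
    x ∈ jacobson (⊥ : Ideal R) := by
  refine mem_jacobson_iff.2 fun y => ?_
  obtain ⟨u, hu⟩ := (h y).isUnit_add_one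
  refine ⟨↑u⁻¹, ?_⟩
  rw [mem_bot, mul_assoc, ← mul_add_one, ← hu, Units.inv_mul, sub_self]

end Ideal

/-- The paper's `Q(a, b, c) = a E₂₁ + b E_{d-2,d-1} + c E_{d-2,d}`, shifted to `0`-based indices. -/
def radicalMatrix {R : Type*} [Semiring R] {d : ℕ} (hd : 4 ≤ d) (a b c : R) :
    Matrix (Fin d) (Fin d) R :=
  a • single ⟨1, by grind⟩ ⟨0, by grind⟩ 1 + b • single ⟨d - 3, by grind⟩ ⟨d - 2, by grind⟩ 1
    + c • single ⟨d - 3, by grind⟩ ⟨d - 1, by grind⟩ 1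

section radicalMatrix

variable {R : Type*} [Semiring R] {d : ℕ} (hd : 4 ≤ d)

theorem radicalMatrix_apply (a b c : R) (i j : Fin d) :
    radicalMatrix hd a b c i j =
      if (i : ℕ) = 1 ∧ (j : ℕ) = 0 then a
      else if (i : ℕ) = d - 3 ∧ (j : ℕ) = d - 2 then b
      else if (i : ℕ) = d - 3 ∧ (j : ℕ) = d - 1 then c
      else 0 := by
  simp only [radicalMatrix, Matrix.add_apply, Matrix.smul_apply, single_apply, Fin.ext_iff,
    smul_eq_mul]
  split_ifs <;> grind

theorem radicalMatrix_mul_radicalMatrix (a b c a' b' c' : R) :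
    radicalMatrix hd a b c * radicalMatrix hd a' b' c' = 0 := by
  ext i j
  rw [mul_apply, Matrix.zero_apply]
  refine Finset.sum_eq_zero fun k _ => ?_
  simp only [radicalMatrix_apply]
  split_ifs <;> grind

end radicalMatrix

/-- Coordinate `k` of `BDform` is the edge `{k, k + 1}` for `k < d - 2` and `{d - 3, d - 1}` for
`k = d - 2`. -/
def dynkinD (d : ℕ) : SimpleGraph (Fin d) :=
  SimpleGraph.fromRel fun s t =>
    ((t : ℕ) = s + 1 ∧ (t : ℕ) ≤ d - 2) ∨ ((s : ℕ) = d - 3 ∧ (t : ℕ) = d - 1)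

/-- The excluded pairs `(i, j)` are the leaves `j` of `D_d` with their neighbours `i`. -/
theorem exists_dynkinD_adj_ne {d : ℕ} (hd : 4 ≤ d) {i j : Fin d}
    (h₁ : ¬((i : ℕ) = 1 ∧ (j : ℕ) = 0)) (h₂ : ¬((i : ℕ) = d - 3 ∧ (j : ℕ) = d - 2))
    (h₃ : ¬((i : ℕ) = d - 3 ∧ (j : ℕ) = d - 1)) : ∃ t, (dynkinD d).Adj j t ∧ t ≠ i := by
  simp only [dynkinD, SimpleGraph.fromRel_adj, ne_eq, Fin.ext_iff]
  by_cases hup : (j : ℕ) + 1 ≤ d - 2 ∧ (i : ℕ) ≠ j + 1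
  · exact ⟨⟨j + 1, by omega⟩, by grind⟩
  by_cases hdown : (j : ℕ) ≤ d - 2
  · exact ⟨⟨j - 1, by omega⟩, by grind⟩
  · exact ⟨⟨d - 3, by omega⟩, by grind⟩

namespace AdjDRing

variable {p d : ℕ}

theorem isEdgeAdjoint (x : AdjDRing p d) {s t : Fin d} (hst : (dynkinD d).Adj s t) :
    x.1.1.IsEdgeAdjoint x.1.2.unop s t := by
  suffices key : ∀ s t : Fin d, s ≠ t →
      ((t : ℕ) = s + 1 ∧ (t : ℕ) ≤ d - 2) ∨ ((s : ℕ) = d - 3 ∧ (t : ℕ) = d - 1) →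
      x.1.1.IsEdgeAdjoint x.1.2.unop s t by
    obtain ⟨hne, h | h⟩ := hst
    · exact key s t hne h
    · exact (key t s hne.symm h).symm
  rintro ⟨s, hs⟩ ⟨t, ht⟩ hne h u v
  simp only [ne_eq, Fin.mk.injEq] at hne h
  rcases h with ⟨rfl, htd⟩ | ⟨rfl, rfl⟩
  · simpa [BDform, show s < d - 2 by omega] using congrFun (x.2 u v) ⟨s, by omega⟩
  · simpa [BDform] using congrFun (x.2 u v) ⟨d - 2, by omega⟩

theorem apply_eq_zero_of_ne (hd : 4 ≤ d) (x : AdjDRing p d) {i j : Fin d} (hij : i ≠ j)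
    (h₁ : ¬((i : ℕ) = 1 ∧ (j : ℕ) = 0)) (h₂ : ¬((i : ℕ) = d - 3 ∧ (j : ℕ) = d - 2))
    (h₃ : ¬((i : ℕ) = d - 3 ∧ (j : ℕ) = d - 1)) : x.1.1 i j = 0 ∧ x.1.2.unop i j = 0 := by
  obtain ⟨t, hjt, hti⟩ := exists_dynkinD_adj_ne hd h₁ h₂ h₃
  have hx := isEdgeAdjoint x hjt
  exact ⟨hx.left_apply_eq_zero hjt.ne hij hti.symm, hx.right_apply_eq_zero hjt.ne hij hti.symm⟩

/-- Row `j` of `f` is diagonal when `j ∉ {1, d - 3}` and column `j` otherwise, so the `j`-th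
diagonal entry is multiplicative. -/
def diagHom (hd : 4 ≤ d) (j : Fin d) : AdjDRing p d →+* ZMod p where
  toFun x := x.1.1 j j
  map_one' := one_apply_eq j
  map_zero' := rfl
  map_add' _ _ := rfl
  map_mul' x y := by
    by_cases hj : (j : ℕ) = 1 ∨ (j : ℕ) = d - 3
    · refine mul_apply_of_col_eq_zero _ (fun k hk => ?_) j
      exact (apply_eq_zero_of_ne hd y hk (by omega) (by omega) (by omega)).1
    · refine mul_apply_of_row_eq_zero (fun k hk => ?_) _ j
      exact (apply_eq_zero_of_ne hd x hk.symm (by omega) (by omega) (by omega)).1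

theorem diagHom_apply (hd : 4 ≤ d) (j : Fin d) (x : AdjDRing p d) :
    diagHom hd j x = x.1.1 j j := rfl

theorem unop_snd_eq_neg_fst (hd : 4 ≤ d) {x : AdjDRing p d} (hx : ∀ j, diagHom hd j x = 0) :
    x.1.2.unop = -x.1.1 := by
  ext i j
  rw [neg_apply]
  by_cases h : ((i : ℕ) = 1 ∧ (j : ℕ) = 0) ∨ ((i : ℕ) = d - 3 ∧ (j : ℕ) = d - 2) ∨
      ((i : ℕ) = d - 3 ∧ (j : ℕ) = d - 1)
  · have hji : (dynkinD d).Adj j i := by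
      simp only [dynkinD, SimpleGraph.fromRel_adj, ne_eq, Fin.ext_iff]
      grind
    exact (isEdgeAdjoint x hji).right_apply_eq_neg hji.ne
  simp only [not_or] at h
  obtain ⟨h₁, h₂, h₃⟩ := h
  obtain rfl | hij := eq_or_ne i j
  · obtain ⟨t, hit, -⟩ := exists_dynkinD_adj_ne hd h₁ h₂ h₃
    rw [← (isEdgeAdjoint x hit.symm).left_apply_diag hit.ne.symm]
    simp only [← diagHom_apply hd, hx, neg_zero]
  · obtain ⟨hf, hg⟩ := apply_eq_zero_of_ne hd x hij h₁ h₂ h₃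
    rw [hf, hg, neg_zero]

theorem exists_fst_eq_radicalMatrix (hd : 4 ≤ d) {x : AdjDRing p d}
    (hx : ∀ j, diagHom hd j x = 0) : ∃ a b c : ZMod p, x.1.1 = radicalMatrix hd a b c := by
  refine ⟨x.1.1 ⟨1, by omega⟩ ⟨0, by omega⟩, x.1.1 ⟨d - 3, by omega⟩ ⟨d - 2, by omega⟩,
    x.1.1 ⟨d - 3, by omega⟩ ⟨d - 1, by omega⟩, ?_⟩
  ext i j
  rw [radicalMatrix_apply]
  split_ifs with h₁ h₂ h₃
  · exact congr_arg₂ x.1.1 (Fin.ext h₁.1) (Fin.ext h₁.2)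
  · exact congr_arg₂ x.1.1 (Fin.ext h₂.1) (Fin.ext h₂.2)
  · exact congr_arg₂ x.1.1 (Fin.ext h₃.1) (Fin.ext h₃.2)
  obtain rfl | hij := eq_or_ne i j
  · exact hx i
  · exact (apply_eq_zero_of_ne hd x hij h₁ h₂ h₃).1

theorem forall_diagHom_eq_zero_iff (hd : 4 ≤ d) (x : AdjDRing p d) :
    (∀ j, diagHom hd j x = 0) ↔
      ∃ a b c : ZMod p, x.1 = (radicalMatrix hd a b c, op (-radicalMatrix hd a b c)) := by
  refine ⟨fun hx => ?_, ?_⟩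
  · obtain ⟨a, b, c, hf⟩ := exists_fst_eq_radicalMatrix hd hx
    refine ⟨a, b, c, Prod.ext hf ?_⟩
    rw [← hf, ← unop_snd_eq_neg_fst hd hx, op_unop]
  · rintro ⟨a, b, c, hx⟩ j
    rw [diagHom_apply, hx]
    simp only [radicalMatrix_apply]
    grind

theorem mul_eq_zero_of_forall_diagHom (hd : 4 ≤ d) {x y : AdjDRing p d}
    (hx : ∀ j, diagHom hd j x = 0) (hy : ∀ j, diagHom hd j y = 0) : x * y = 0 := by
  obtain ⟨a, b, c, hx⟩ := (forall_diagHom_eq_zero_iff hd x).1 hx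
  obtain ⟨a', b', c', hy⟩ := (forall_diagHom_eq_zero_iff hd y).1 hy
  refine Subtype.ext ?_
  rw [Subring.coe_mul, hx, hy, Prod.mk_mul_mk, ← op_mul, neg_mul_neg,
    radicalMatrix_mul_radicalMatrix, radicalMatrix_mul_radicalMatrix, op_zero]
  rfl

theorem mem_jacobson_bot_iff [Fact p.Prime] (hd : 4 ≤ d) (x : AdjDRing p d) :
    x ∈ Ideal.jacobson (⊥ : Ideal (AdjDRing p d)) ↔ ∀ j, diagHom hd j x = 0 := by
  refine ⟨fun hx j => Ideal.jacobson_bot_le_ker _ (ZMod.ringHom_surjective _) hx,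
    fun hx => Ideal.mem_jacobson_bot_of_isNilpotent_mul fun y => ⟨2, ?_⟩⟩
  have hyx : ∀ j, diagHom hd j (y * x) = 0 := fun j => by rw [map_mul, hx, mul_zero]
  rw [pow_two, mul_eq_zero_of_forall_diagHom hd hyx hyx]

end AdjDRing

/-- Let `p` be a prime, `d ≥ 4`, and let `B_D` be the type-`D`
bilinear map above.  The Jacobson radical `J` of the ring `Adj(B_D)` (the intersection of
its maximal left ideals, i.e. `Ideal.jacobson ⊥`) consists exactly of the pairs
`(Q(x,y,z), −Q(x,y,z))` with `Q(x,y,z) = x·E_{21} + y·E_{d−2,d−1} + z·E_{d−2,d}`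
(in `0`-based indexing `E 1 0`, `E (d−3) (d−2)`, `E (d−3) (d−1)`), and `J² = 0`. -/
theorem jacobson_adjoint_typeD (p d : ℕ) [Fact p.Prime] (hd : 4 ≤ d) :
    (∀ x : AdjDRing p d,
      x ∈ Ideal.jacobson (⊥ : Ideal (AdjDRing p d)) ↔
        ∃ a b c : ZMod p,
          (x : Matrix (Fin d) (Fin d) (ZMod p) × (Matrix (Fin d) (Fin d) (ZMod p))ᵐᵒᵖ) =
            (a • Matrix.single ⟨1, by omega⟩ ⟨0, by omega⟩ 1
              + b • Matrix.single ⟨d - 3, by omega⟩ ⟨d - 2, by omega⟩ 1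
              + c • Matrix.single ⟨d - 3, by omega⟩ ⟨d - 1, by omega⟩ 1,
             MulOpposite.op
              (-(a • Matrix.single ⟨1, by omega⟩ ⟨0, by omega⟩ 1
                + b • Matrix.single ⟨d - 3, by omega⟩ ⟨d - 2, by omega⟩ 1
                + c • Matrix.single ⟨d - 3, by omega⟩ ⟨d - 1, by omega⟩ 1)))) ∧
    (∀ x y : AdjDRing p d, x ∈ Ideal.jacobson (⊥ : Ideal (AdjDRing p d)) →
      y ∈ Ideal.jacobson (⊥ : Ideal (AdjDRing p d)) → x * y = 0) := by
  have hJ := AdjDRing.mem_jacobson_bot_iff hd (p := p)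
  exact ⟨fun x => (hJ x).trans (AdjDRing.forall_diagHom_eq_zero_iff hd x),
    fun x y hx hy => AdjDRing.mul_eq_zero_of_forall_diagHom hd ((hJ x).1 hx) ((hJ y).1 hy)⟩
end

section
/- Let p ≥ 3 be a prime, d ≥ 3, and let U = UT(d+1, Z/pZ) be the group of upper unitriangular (d+1) × (d+1) matrices over Z/pZ. Set m = ⌈d/2⌉ and for 1 ≤ k ≤ m − 1 let H_k be the subgroup of U generated by γ_2(U) together with the root subgroups X_1, …, X_k and X_{d−k+1}, …, X_d. Then each H_k is a characteristic subgroup of U, i.e., it is mapped to itself by every automorphism of U. -/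
open Matrix

/-- The group of upper unitriangular `n × n` matrices over `ℤ/pℤ`, as a subgroup of the
units of the matrix ring: upper triangular matrices all of whose diagonal entries are `1`. -/
def UT (p n : ℕ) [Fact p.Prime] : Subgroup (Matrix (Fin n) (Fin n) (ZMod p))ˣ where
  carrier := {A | (∀ i j : Fin n, j < i → (A : Matrix (Fin n) (Fin n) (ZMod p)) i j = 0) ∧
                  ∀ i : Fin n, (A : Matrix (Fin n) (Fin n) (ZMod p)) i i = 1}
  one_mem' := by
    refine ⟨fun i j hij => ?_, fun i => ?_⟩
    · simp [Matrix.one_apply, (ne_of_lt hij).symm]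
    · simp
  mul_mem' := by
    rintro A B ⟨hA0, hA1⟩ ⟨hB0, hB1⟩
    refine ⟨fun i j hij => ?_, fun i => ?_⟩
    · show (A.val * B.val) i j = 0
      rw [Matrix.mul_apply]
      refine Finset.sum_eq_zero fun k _ => ?_
      rcases lt_or_ge k i with h | h
      · rw [hA0 i k h, zero_mul]
      · rw [hB0 k j (lt_of_lt_of_le hij h), mul_zero]
    · show (A.val * B.val) i i = 1
      rw [Matrix.mul_apply, Finset.sum_eq_single i]
      · rw [hA1, hB1, one_mul]
      · intro k _ hk
        rcases lt_or_gt_of_ne hk with h | h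
        · rw [hA0 i k h, zero_mul]
        · rw [hB0 k i h, mul_zero]
      · exact fun h => absurd (Finset.mem_univ i) h
  inv_mem' := by
    rintro A ⟨hA0, hA1⟩
    have hBT : (A : Matrix (Fin n) (Fin n) (ZMod p)).BlockTriangular id :=
      fun i j hij => hA0 i j hij
    have hInv : Invertible (A : Matrix (Fin n) (Fin n) (ZMod p)) := A.invertible
    have hBTinv : ((A : Matrix (Fin n) (Fin n) (ZMod p))⁻¹).BlockTriangular id :=
      Matrix.blockTriangular_inv_of_blockTriangular hBT
    have hval : ((A⁻¹ : (Matrix (Fin n) (Fin n) (ZMod p))ˣ) : Matrix (Fin n) (Fin n) (ZMod p))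
        = (A : Matrix (Fin n) (Fin n) (ZMod p))⁻¹ := Matrix.coe_units_inv A
    refine ⟨fun i j hij => ?_, fun i => ?_⟩
    · rw [hval]; exact hBTinv (show (id j : Fin n) < id i from hij)
    · rw [hval]
      have hmul : (A : Matrix (Fin n) (Fin n) (ZMod p))⁻¹ * (A : Matrix (Fin n) (Fin n) (ZMod p)) = 1 :=
        Matrix.nonsing_inv_mul _ ((Matrix.isUnit_iff_isUnit_det _).mp A.isUnit)
      have := congrFun (congrFun hmul i) i
      rw [Matrix.mul_apply, Finset.sum_eq_single i] at this
      · rwa [hA1 i, mul_one, Matrix.one_apply_eq] at this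
      · intro k _ hk
        rcases lt_or_gt_of_ne hk with h | h
        · exact mul_eq_zero_of_left (hBTinv (show (id k : Fin n) < id i from h)) _
        · exact mul_eq_zero_of_right _ (hA0 k i h)
      · exact fun h => absurd (Finset.mem_univ i) h

/-- The root subgroup `X_i = {1 + t·E_{i,i+1} : t ∈ ℤ/pℤ}` of `UT p (d+1)`. -/
def Xroot (p d : ℕ) [Fact p.Prime] (i : Fin d) : Subgroup ↥(UT p (d + 1)) where
  carrier := {A | ∃ t : ZMod p,
    ((A : (Matrix (Fin (d+1)) (Fin (d+1)) (ZMod p))ˣ) : Matrix (Fin (d+1)) (Fin (d+1)) (ZMod p))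
      = 1 + t • Matrix.single i.castSucc i.succ 1}
  one_mem' := ⟨0, by simp⟩
  mul_mem' := by
    rintro a b ⟨t, ht⟩ ⟨s, hs⟩
    refine ⟨t + s, ?_⟩
    have : ((((a * b : ↥(UT p (d+1))) : (Matrix (Fin (d+1)) (Fin (d+1)) (ZMod p))ˣ)) :
        Matrix (Fin (d+1)) (Fin (d+1)) (ZMod p)) =
        (1 + t • Matrix.single i.castSucc i.succ 1) *
        (1 + s • Matrix.single i.castSucc i.succ 1) := by
      push_cast
      rw [← ht, ← hs]
    rw [this]
    have hEE : (Matrix.single i.castSucc i.succ (1 : ZMod p)) *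
        (Matrix.single i.castSucc i.succ 1) = 0 :=
      Matrix.single_mul_single_of_ne _ _ _ _ (Fin.castSucc_lt_succ (i := i)).ne' _
    rw [mul_add, mul_one, add_mul, one_mul, smul_mul_smul_comm, hEE, smul_zero, add_zero,
      add_smul]
    abel
  inv_mem' := by
    rintro a ⟨t, ht⟩
    refine ⟨-t, ?_⟩
    have hEE : (Matrix.single i.castSucc i.succ (1 : ZMod p)) *
        (Matrix.single i.castSucc i.succ 1) = 0 :=
      Matrix.single_mul_single_of_ne _ _ _ _ (Fin.castSucc_lt_succ (i := i)).ne' _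
    have hmul : ((a : (Matrix (Fin (d+1)) (Fin (d+1)) (ZMod p))ˣ) :
        Matrix (Fin (d+1)) (Fin (d+1)) (ZMod p)) *
        (1 + (-t) • Matrix.single i.castSucc i.succ 1) = 1 := by
      rw [ht, mul_add, mul_one, add_mul, one_mul, smul_mul_smul_comm, hEE, smul_zero, add_zero]
      rw [neg_smul]
      abel
    have hval : (((a⁻¹ : ↥(UT p (d+1))) : (Matrix (Fin (d+1)) (Fin (d+1)) (ZMod p))ˣ) :
        Matrix (Fin (d+1)) (Fin (d+1)) (ZMod p))
        = ((a : (Matrix (Fin (d+1)) (Fin (d+1)) (ZMod p))ˣ) :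
            Matrix (Fin (d+1)) (Fin (d+1)) (ZMod p))⁻¹ := by
      rw [InvMemClass.coe_inv]
      exact Matrix.coe_units_inv _
    rw [hval, Matrix.inv_eq_right_inv hmul]

/-- The subgroup `H_k` of `UT p (d+1)`: generated by `γ₂(U) = lowerCentralSeries U 1`
together with the root subgroups `X_1, …, X_k` and `X_{d−k+1}, …, X_d`
(in `0`-based indexing: `X i` for `i < k` or `d − k ≤ i`). -/
def Hsub (p d : ℕ) [Fact p.Prime] (k : ℕ) : Subgroup ↥(UT p (d + 1)) :=
  Subgroup.lowerCentralSeries (⊤ : Subgroup ↥(UT p (d + 1))) 1 ⊔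
    ⨆ i ∈ {i : Fin d | (i : ℕ) < k ∨ d - k ≤ (i : ℕ)}, Xroot p d i


/-!
Automorphisms of `U` preserve the terms `γ_m` of the lower central series, which are the
subgroups `level m` of matrices vanishing below the `m`-th superdiagonal, and hence every
subgroup `C_U(K / L) = {g | ⁅g, K⁆ ⊆ L}` built from characteristic `K` and `L`. All subgroups
involved contain `γ₂` and are described by the first-superdiagonal coordinates (the coordinates
of `U / γ₂`) allowed to be nonzero. Let `M = {k, …, d - k - 1}` be the coordinates vanishing
on `H_k`.

* If `|M| ≥ 4`, then `H_k = C_U(C_U(γ_m / γ_{m+2}) / γ₃)` for `m = d - k - 1`: the inner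
  centralizer allows the coordinates strictly inside `M`, and the outer one kills their
  neighbours, which make up `M`.
* If `|M| = 3`, the same subgroup only misses the middle coordinate of `M`, and `H_k` is its
  intersection with `H_{k+1}`.
* If `|M| ≤ 2`, consider the condition `⁅A, ⁅A, X⁆⁆ ∈ L` for all `X` in a centralizer as above,
  with `L ⊆ γ₃` characteristic. As `p` is odd, it says that certain products of two coordinates
  of `A` vanish. For `|M| = 1`, the elements satisfying it outside a characteristic subgroup
  generate `H_k`. For `|M| = 2`, they form `H_k ∪ Q` with `Q ≠ U`; an automorphism cannot map
  `H_k` into `Q`, because `H_k` and a characteristic subgroup contained in `Q` generate `U`.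
-/

open scoped commutatorElement

namespace Subgroup

variable {G : Type*} [Group G]

theorem Characteristic.apply_mem_iff {H : Subgroup G} [hH : H.Characteristic] (φ : G ≃* G)
    {g : G} : φ g ∈ H ↔ g ∈ H := by
  conv_rhs => rw [← hH.fixed φ]
  rfl

def centralizerModulo (K L : Subgroup G) [L.Normal] : Subgroup G where
  carrier := {g | ∀ x ∈ K, ⁅g, x⁆ ∈ L}
  one_mem' x _ := by simp [commutatorElement_one_left, L.one_mem]
  mul_mem' {g h} hg hh x hx := by
    rw [commutatorElement_mul_left_eq_conj_mul]
    exact L.mul_mem (‹L.Normal›.conj_mem _ (hh x hx) g) (hg x hx)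
  inv_mem' {g} hg x hx := by
    rw [commutatorElement_inv_left]
    have := ‹L.Normal›.conj_mem _ (L.inv_mem (hg x hx)) g⁻¹
    simpa [commutatorElement_inv] using this

theorem mem_centralizerModulo {K L : Subgroup G} [L.Normal] {g : G} :
    g ∈ centralizerModulo K L ↔ ∀ x ∈ K, ⁅g, x⁆ ∈ L := Iff.rfl

theorem forall_word_mem_apply {K L : Subgroup G} [K.Characteristic] [L.Characteristic]
    (w : G → G → G) (φ : G ≃* G) (hw : ∀ a b, φ (w a b) = w (φ a) (φ b)) {g : G}
    (hg : ∀ x ∈ K, w g x ∈ L) : ∀ x ∈ K, w (φ g) x ∈ L := by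
  intro x hx
  have hx' : φ.symm x ∈ K := (Characteristic.apply_mem_iff φ).mp (by simpa using hx)
  have := (Characteristic.apply_mem_iff φ).mpr (hg _ hx')
  rwa [hw, MulEquiv.apply_symm_apply] at this

instance centralizerModulo_characteristic (K L : Subgroup G) [K.Characteristic]
    [L.Characteristic] : (centralizerModulo K L).Characteristic :=
  characteristic_iff_le_comap.mpr fun φ _ hg =>
    forall_word_mem_apply (fun a b => ⁅a, b⁆) φ (fun _ _ => map_commutatorElement _ _ _) hg

theorem closure_characteristic {T : Set G} (hT : ∀ φ : G ≃* G, ∀ g ∈ T, φ g ∈ T) :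
    (closure T).Characteristic :=
  characteristic_iff_map_le.mpr fun φ => by
    rw [MonoidHom.map_closure]
    exact closure_mono (by rintro _ ⟨g, hg, rfl⟩; exact hT φ g hg)

theorem map_le_of_map_subset_union {H K Q : Subgroup G} [K.Characteristic] (hHK : H ⊔ K = ⊤)
    (hKQ : K ≤ Q) (hQ : Q ≠ ⊤) (φ : G ≃* G)
    (hφ : (H.map φ.toMonoidHom : Set G) ⊆ H ∪ Q) : H.map φ.toMonoidHom ≤ H := by
  refine (SubgroupClass.subset_union.mp hφ).resolve_right fun hHQ => hQ (eq_top_iff.mpr ?_)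
  calc ⊤ = (H ⊔ K).map φ.toMonoidHom := by rw [hHK, map_top_of_surjective _ φ.surjective]
    _ = H.map φ.toMonoidHom ⊔ K := by
      rw [map_sup, characteristic_iff_map_eq.mp (inferInstance : K.Characteristic) φ]
    _ ≤ Q := sup_le hHQ hKQ

end Subgroup

theorem two_ne_zero_of_three_le {p : ℕ} (hp : 3 ≤ p) : (2 : ZMod p) ≠ 0 := by
  intro h
  have := Nat.le_of_dvd two_pos ((ZMod.natCast_eq_zero_iff 2 p).mp (by exact_mod_cast h))
  omega

/-! ### Entries and the superdiagonal filtration -/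

namespace UT

variable {p n : ℕ} [Fact p.Prime]

def toMatrix (g : UT p n) : Matrix (Fin n) (Fin n) (ZMod p) :=
  ((g : (Matrix (Fin n) (Fin n) (ZMod p))ˣ) : Matrix (Fin n) (Fin n) (ZMod p))

@[simp]
theorem toMatrix_mul (g h : UT p n) : toMatrix (g * h) = toMatrix g * toMatrix h := rfl

@[simp]
theorem toMatrix_one : toMatrix (1 : UT p n) = 1 := rfl

theorem toMatrix_injective : Function.Injective (toMatrix : UT p n → _) :=
  fun _ _ h => Subtype.ext (Units.ext h)

/-- The entries of `g - 1`, indexed by `ℕ` and extended by zero outside `Fin n`. -/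
def entry (g : UT p n) (i j : ℕ) : ZMod p :=
  if h : i < n ∧ j < n then (toMatrix g - 1) ⟨i, h.1⟩ ⟨j, h.2⟩ else 0

theorem entry_of_not_lt {g : UT p n} {i j : ℕ} (h : ¬(i < n ∧ j < n)) : entry g i j = 0 :=
  dif_neg h

theorem entry_fin (g : UT p n) (i j : Fin n) : entry g i j = (toMatrix g - 1) i j :=
  dif_pos ⟨i.2, j.2⟩

theorem ext_entry {g h : UT p n} (H : ∀ i j, entry g i j = entry h i j) : g = h :=
  toMatrix_injective (Matrix.ext fun i j => by simpa [entry_fin] using H i j)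

@[simp]
theorem entry_one (i j : ℕ) : entry (1 : UT p n) i j = 0 := by
  unfold entry
  split <;> simp

theorem entry_eq_zero_of_lt_succ (g : UT p n) {i j : ℕ} (h : j < i + 1) : entry g i j = 0 := by
  by_cases hij : i < n ∧ j < n
  · obtain ⟨hlow, hdiag⟩ := g.2
    rw [entry_fin g ⟨i, hij.1⟩ ⟨j, hij.2⟩, Matrix.sub_apply]
    rcases Nat.lt_or_ge j i with hji | hji
    · rw [toMatrix, hlow _ _ hji, Matrix.one_apply_ne (by simp [Fin.ext_iff]; omega), sub_zero]
    · obtain rfl : j = i := by omega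
      rw [toMatrix, hdiag, Matrix.one_apply_eq, sub_self]
  · exact entry_of_not_lt hij

theorem entry_mul (g h : UT p n) (i j : ℕ) :
    entry (g * h) i j =
      entry g i j + entry h i j + ∑ l ∈ Finset.range n, entry g i l * entry h l j := by
  by_cases hij : i < n ∧ j < n
  · have hmat : toMatrix (g * h) - 1 =
        (toMatrix g - 1) + (toMatrix h - 1) + (toMatrix g - 1) * (toMatrix h - 1) := by
      rw [toMatrix_mul]
      noncomm_ring
    obtain ⟨hi, hj⟩ := hij
    lift i to Fin n using hi
    lift j to Fin n using hj
    rw [Finset.sum_range fun l => entry g i l * entry h l j]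
    simp only [entry_fin, hmat, Matrix.add_apply, Matrix.mul_apply]
  · simp only [entry_of_not_lt hij, zero_add]
    refine (Finset.sum_eq_zero fun l _ => ?_).symm
    rcases not_and_or.mp hij with hi | hj
    · rw [entry_of_not_lt (by tauto), zero_mul]
    · rw [entry_of_not_lt (i := l) (by tauto), mul_zero]

theorem sum_entry_mul_entry_eq_zero {a b : ℕ} {g h : UT p n}
    (hg : ∀ i j, j < i + a → entry g i j = 0) (hh : ∀ i j, j < i + b → entry h i j = 0)
    {i j : ℕ} (hj : j < i + a + b) : ∑ l ∈ Finset.range n, entry g i l * entry h l j = 0 :=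
  Finset.sum_eq_zero fun l _ => by
    rcases Nat.lt_or_ge l (i + a) with hl | hl
    · rw [hg i l hl, zero_mul]
    · rw [hh l j (by omega), mul_zero]

theorem sum_entry_mul_entry_eq {a b : ℕ} {g h : UT p n}
    (hg : ∀ i j, j < i + a → entry g i j = 0) (hh : ∀ i j, j < i + b → entry h i j = 0)
    (i : ℕ) : ∑ l ∈ Finset.range n, entry g i l * entry h l (i + a + b) =
      entry g i (i + a) * entry h (i + a) (i + a + b) := by
  by_cases hia : i + a < n
  · refine Finset.sum_eq_single_of_mem _ (Finset.mem_range.mpr hia) fun l _ hl => ?_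
    rcases Nat.lt_or_gt_of_ne hl with hl | hl
    · rw [hg i l hl, zero_mul]
    · rw [hh l _ (by omega), mul_zero]
  · rw [entry_of_not_lt (j := i + a) (by omega), zero_mul]
    exact Finset.sum_eq_zero fun l hl => by
      rw [hg i l (by simp at hl; omega), zero_mul]

theorem entry_inv_eq_zero {m : ℕ} {g : UT p n} (hg : ∀ i j, j < i + m → entry g i j = 0) :
    ∀ i j, j < i + m → entry g⁻¹ i j = 0 := by
  suffices ∀ r ≤ m, ∀ i j, j < i + r → entry g⁻¹ i j = 0 from this m le_rfl
  intro r
  induction r with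
  | zero => exact fun _ i j hj => entry_eq_zero_of_lt_succ _ (by omega)
  | succ r ih =>
    intro hr i j hj
    rcases Nat.lt_or_ge j (i + r) with hj' | hj'
    · exact ih (by omega) i j hj'
    · have h := entry_mul g⁻¹ g i j
      rw [inv_mul_cancel, entry_one, hg i j (by omega),
        sum_entry_mul_entry_eq_zero (ih (by omega)) hg (by omega)] at h
      linear_combination -h

def level (p n m : ℕ) [Fact p.Prime] : Subgroup (UT p n) where
  carrier := {g | ∀ i j, j < i + m → entry g i j = 0}
  one_mem' _ _ _ := entry_one _ _
  mul_mem' {g h} hg hh i j hj := by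
    rw [entry_mul, hg i j hj, hh i j hj, sum_entry_mul_entry_eq_zero hg hh (by omega)]
    ring
  inv_mem' := entry_inv_eq_zero

theorem level_antitone {a b : ℕ} (h : a ≤ b) : level p n b ≤ level p n a :=
  fun _ hg i j hj => hg i j (by omega)

theorem level_one : level p n 1 = ⊤ :=
  eq_top_iff.mpr fun g _ _ _ => entry_eq_zero_of_lt_succ g

theorem mem_level_one (g : UT p n) : g ∈ level p n 1 :=
  level_one.ge (Subgroup.mem_top g)

theorem level_zero : level p n 0 = ⊤ :=
  eq_top_iff.mpr fun g _ _ _ _ => entry_eq_zero_of_lt_succ g (by omega)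

theorem mem_level_succ_iff {m : ℕ} {g : UT p n} :
    g ∈ level p n (m + 1) ↔ g ∈ level p n m ∧ ∀ i, entry g i (i + m) = 0 := by
  refine ⟨fun hg => ⟨level_antitone m.le_succ hg, fun i => hg i _ (by omega)⟩,
    fun ⟨hg, hm⟩ i j hj => ?_⟩
  rcases Nat.lt_or_ge j (i + m) with h | h
  · exact hg i j h
  · obtain rfl : j = i + m := by omega
    exact hm i

variable {a b : ℕ} {g h : UT p n}

theorem entry_mul_of_lt (hg : g ∈ level p n a) (hh : h ∈ level p n b) {i j : ℕ}
    (hj : j < i + a + b) : entry (g * h) i j = entry g i j + entry h i j := by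
  rw [entry_mul, sum_entry_mul_entry_eq_zero hg hh hj, add_zero]

theorem entry_mul_add_add (hg : g ∈ level p n a) (hh : h ∈ level p n b) (i : ℕ) :
    entry (g * h) i (i + a + b) =
      entry g i (i + a + b) + entry h i (i + a + b) +
        entry g i (i + a) * entry h (i + a) (i + a + b) := by
  rw [entry_mul, sum_entry_mul_entry_eq hg hh]

theorem entry_inv (ha : 1 ≤ a) (hg : g ∈ level p n a) (i : ℕ) :
    entry g⁻¹ i (i + a) = -entry g i (i + a) := by
  have h := entry_mul_of_lt hg (inv_mem hg) (i := i) (j := i + a) (by omega)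
  rw [mul_inv_cancel, entry_one] at h
  linear_combination -h

theorem commutator_mem_level (hg : g ∈ level p n a) (hh : h ∈ level p n b) :
    ⁅g, h⁆ ∈ level p n (a + b) := by
  have hc : ⁅g, h⁆ * (h * g) = g * h := by group
  suffices ∀ r ≤ a + b, ⁅g, h⁆ ∈ level p n r from this _ le_rfl
  intro r hr
  induction r with
  | zero => simp [level_zero]
  | succ r ih =>
    rw [mem_level_succ_iff]
    refine ⟨ih (by omega), fun i => ?_⟩
    have e := entry_mul_of_lt (ih (by omega)) (mem_level_one (h * g)) (i := i) (j := i + r)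
      (by omega)
    rw [hc, entry_mul_of_lt hg hh (by omega), entry_mul_of_lt hh hg (by omega)] at e
    linear_combination -e

theorem entry_commutator (hg : g ∈ level p n a) (hh : h ∈ level p n b) (i : ℕ) :
    entry ⁅g, h⁆ i (i + a + b) =
      entry g i (i + a) * entry h (i + a) (i + a + b) -
        entry h i (i + b) * entry g (i + b) (i + a + b) := by
  have hc : ⁅g, h⁆ * (h * g) = g * h := by group
  have e := entry_mul_of_lt (commutator_mem_level hg hh) (mem_level_one (h * g)) (i := i)
    (j := i + a + b) (by omega)
  rw [hc, entry_mul_add_add hg hh, show i + a + b = i + b + a by omega,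
    entry_mul_add_add hh hg] at e
  rw [show i + a + b = i + b + a by omega]
  linear_combination -e

def coord (g : UT p n) (i : ℕ) : ZMod p :=
  entry g i (i + 1)

theorem coord_mul (g h : UT p n) (i : ℕ) : coord (g * h) i = coord g i + coord h i :=
  entry_mul_of_lt (mem_level_one g) (mem_level_one h) (by omega)

theorem mem_level_two_iff {g : UT p n} : g ∈ level p n 2 ↔ ∀ i, coord g i = 0 := by
  rw [mem_level_succ_iff]
  exact and_iff_right (mem_level_one g)

theorem entry_commutator_two (g h : UT p n) (i : ℕ) :
    entry ⁅g, h⁆ i (i + 2) = coord g i * coord h (i + 1) - coord h i * coord g (i + 1) :=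
  entry_commutator (mem_level_one g) (mem_level_one h) i

theorem entry_commutator_three (g : UT p n) (hh : h ∈ level p n 2) (i : ℕ) :
    entry ⁅g, h⁆ i (i + 3) =
      coord g i * entry h (i + 1) (i + 3) - entry h i (i + 2) * coord g (i + 2) :=
  entry_commutator (mem_level_one g) hh i

theorem entry_commutator_commutator (g x : UT p n) (i : ℕ) :
    entry ⁅g, ⁅g, x⁆⁆ i (i + 3) =
      coord g i * coord g (i + 1) * coord x (i + 2) -
        2 * coord g i * coord g (i + 2) * coord x (i + 1) +
          coord g (i + 1) * coord g (i + 2) * coord x i := by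
  have hgx : ⁅g, x⁆ ∈ level p n 2 := commutator_mem_level (mem_level_one g) (mem_level_one x)
  rw [entry_commutator_three g hgx, show i + 3 = i + 1 + 2 by omega]
  simp only [entry_commutator_two]
  ring_nf

/-! ### Root elements -/

def rootUnit {i j : Fin n} (hij : i < j) (t : ZMod p) : (Matrix (Fin n) (Fin n) (ZMod p))ˣ where
  val := 1 + Matrix.single i j t
  inv := 1 + Matrix.single i j (-t)
  val_inv := by
    rw [mul_add, mul_one, add_mul, one_mul, Matrix.single_mul_single_of_ne _ _ _ _ hij.ne',
      add_zero, add_assoc, ← Matrix.single_add, add_neg_cancel, Matrix.single_zero, add_zero]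
  inv_val := by
    rw [mul_add, mul_one, add_mul, one_mul, Matrix.single_mul_single_of_ne _ _ _ _ hij.ne',
      add_zero, add_assoc, ← Matrix.single_add, neg_add_cancel, Matrix.single_zero, add_zero]

theorem rootUnit_mem {i j : Fin n} (hij : i < j) (t : ZMod p) : rootUnit hij t ∈ UT p n := by
  refine ⟨fun a b hab => ?_, fun a => ?_⟩
  · have : ¬(i = a ∧ j = b) := by
      rintro ⟨rfl, rfl⟩
      exact absurd (hij.trans hab) (lt_irrefl _)
    simp [rootUnit, Matrix.one_apply_ne hab.ne', this]
  · have : ¬(i = a ∧ j = a) := by rintro ⟨rfl, rfl⟩; exact lt_irrefl _ hij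
    simp [rootUnit, this]

/-- The root element `1 + t E_{ij}`; it is `1` unless `i < j < n`. -/
def root (i j : ℕ) (t : ZMod p) : UT p n :=
  if h : i < j ∧ j < n then
    ⟨rootUnit (i := ⟨i, h.1.trans h.2⟩) (j := ⟨j, h.2⟩) h.1 t, rootUnit_mem _ _⟩
  else 1

variable {i j : ℕ} {t : ZMod p}

theorem root_of_not_lt (h : ¬(i < j ∧ j < n)) : root i j t = (1 : UT p n) :=
  dif_neg h

theorem toMatrix_root (hij : i < j) (hj : j < n) :
    toMatrix (root i j t : UT p n) = 1 + Matrix.single ⟨i, hij.trans hj⟩ ⟨j, hj⟩ t := by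
  rw [root, dif_pos ⟨hij, hj⟩]
  rfl

theorem entry_root (hij : i < j) (hj : j < n) (t : ZMod p) (a b : ℕ) :
    entry (root i j t : UT p n) a b = if a = i ∧ b = j then t else 0 := by
  by_cases hab : a < n ∧ b < n
  · rw [entry, dif_pos hab, toMatrix_root hij hj]
    simp [Matrix.single_apply, Fin.ext_iff, eq_comm]
  · rw [entry_of_not_lt hab, if_neg (by omega)]

theorem coord_root (hi : i + 1 < n) (a : ℕ) :
    coord (root i (i + 1) t : UT p n) a = if a = i then t else 0 := by
  rw [coord, entry_root (by omega) hi]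
  simp

@[simp]
theorem root_zero : root i j (0 : ZMod p) = (1 : UT p n) := by
  by_cases h : i < j ∧ j < n
  · exact ext_entry fun a b => by simp [entry_root h.1 h.2]
  · exact root_of_not_lt h

theorem root_mul_root (u : ZMod p) :
    (root i j t : UT p n) * root i j u = root i j (t + u) := by
  by_cases h : i < j ∧ j < n
  · refine ext_entry fun a b => ?_
    have hsum : ∑ l ∈ Finset.range n,
        entry (root i j t : UT p n) a l * entry (root i j u : UT p n) l b = 0 :=
      Finset.sum_eq_zero fun l _ => by
        simp only [entry_root h.1 h.2]
        split_ifs <;> first | (exfalso; omega) | ring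
    rw [entry_mul, hsum, add_zero]
    simp only [entry_root h.1 h.2]
    split_ifs <;> ring
  · simp [root_of_not_lt h]

theorem root_mem_level {m : ℕ} (h : i + m ≤ j) : (root i j t : UT p n) ∈ level p n m := by
  by_cases hij : i < j ∧ j < n
  · intro a b hb
    rw [entry_root hij.1 hij.2, if_neg (by omega)]
  · rw [root_of_not_lt hij]
    exact one_mem _

theorem commutator_root_root {l : ℕ} (hil : i < l) (hlj : l < j) (hj : j < n) (u : ZMod p) :
    ⁅(root i l t : UT p n), (root l j u : UT p n)⁆ = root i j (t * u) := by
  have key : (root i j (t * u) : UT p n) * (root l j u * root i l t) = root i l t * root l j u := by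
    refine toMatrix_injective ?_
    simp only [toMatrix_mul, toMatrix_root hil (hlj.trans hj), toMatrix_root hlj hj,
      toMatrix_root (hil.trans hlj) hj]
    simp only [mul_add, add_mul, mul_one, one_mul, Matrix.single_mul_single_same,
      Matrix.single_mul_single_of_ne _ _ (⟨j, hj⟩ : Fin n) ⟨i, by omega⟩
        (Fin.ne_of_val_ne (show j ≠ i by omega)),
      Matrix.single_mul_single_of_ne _ _ (⟨j, hj⟩ : Fin n) ⟨l, by omega⟩
        (Fin.ne_of_val_ne (show j ≠ l by omega)),
      add_zero]
    abel
  rw [commutatorElement_def, ← key]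
  group

theorem mem_of_root_mem {r : ℕ} (hr : 1 ≤ r) {S : Subgroup (UT p n)}
    (hS : level p n (r + 1) ≤ S) {g : UT p n} (hg : g ∈ level p n r)
    (hroot : ∀ a, root a (a + r) (entry g a (a + r)) ∈ S) : g ∈ S := by
  -- clear the `r`-th superdiagonal from the right, one root element at a time
  suffices ∀ s (g : UT p n), g ∈ level p n r → (∀ a, s ≤ a → entry g a (a + r) = 0) →
      (∀ a, root a (a + r) (entry g a (a + r)) ∈ S) → g ∈ S from
    this n g hg (fun a ha => entry_of_not_lt (by omega)) hroot
  intro s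
  induction s with
  | zero => exact fun g hg h0 _ => hS (mem_level_succ_iff.mpr ⟨hg, fun a => h0 a a.zero_le⟩)
  | succ s ih =>
    intro g hg h0 hroot
    by_cases hs : s + r < n
    swap
    · refine ih g hg (fun a ha => ?_) hroot
      rcases ha.eq_or_lt with rfl | ha
      · exact entry_of_not_lt (by omega)
      · exact h0 a ha
    set t := entry g s (s + r)
    set g' := g * root s (s + r) (-t)
    have hentry : ∀ a, entry g' a (a + r) = entry g a (a + r) + if a = s then -t else 0 := by
      intro a
      rw [entry_mul_of_lt hg (root_mem_level le_rfl) (by omega), entry_root (by omega) hs]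
      simp
    have hg' : g' ∈ S := by
      refine ih g' (mul_mem hg (root_mem_level le_rfl)) (fun a ha => ?_) (fun a => ?_)
      · rcases ha.eq_or_lt with rfl | ha
        · simp [hentry, t]
        · rw [hentry, h0 a ha, if_neg ha.ne']
          simp
      · by_cases ha : a = s
        · subst ha
          simp [hentry, t]
        · simpa [hentry, ha] using hroot a
    have hgg' : g = g' * root s (s + r) t := by
      rw [mul_assoc, root_mul_root, neg_add_cancel, root_zero, mul_one]
    rw [hgg']
    exact mul_mem hg' (hroot s)

theorem root_mem_lowerCentralSeries {m i j : ℕ} (h : i + m < j) (t : ZMod p) :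
    (root i j t : UT p n) ∈ (⊤ : Subgroup (UT p n)).lowerCentralSeries m := by
  induction m generalizing i t with
  | zero => exact Subgroup.mem_top _
  | succ m ih =>
    by_cases hj : j < n
    · rw [← mul_one t, ← commutator_root_root (l := i + 1) (by omega) (by omega) hj,
        Subgroup.lowerCentralSeries_succ, Subgroup.commutator_comm]
      exact Subgroup.commutator_mem_commutator (Subgroup.mem_top _) (ih (by omega) 1)
    · rw [root_of_not_lt (by omega)]
      exact one_mem _

theorem level_succ_eq_lowerCentralSeries (m : ℕ) :
    level p n (m + 1) = (⊤ : Subgroup (UT p n)).lowerCentralSeries m := by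
  refine le_antisymm ?_ ?_
  · suffices ∀ q r, n ≤ r + q →
        level p n (r + 1) ≤ (⊤ : Subgroup (UT p n)).lowerCentralSeries r from
      this n m (by omega)
    intro q
    induction q with
    | zero =>
      intro r hr g hg
      obtain rfl : g = 1 := ext_entry fun i j => by
        by_cases hij : i < n ∧ j < n
        · rw [hg i j (by omega), entry_one]
        · rw [entry_of_not_lt hij, entry_one]
      exact one_mem _
    | succ q ih =>
      intro r hr g hg
      exact mem_of_root_mem (r := r + 1) (by omega)
        ((ih (r + 1) (by omega)).trans (Subgroup.lowerCentralSeries_antitone _ r.le_succ)) hg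
        fun a => root_mem_lowerCentralSeries (by omega) _
  · induction m with
    | zero => simp [level_one]
    | succ m ih =>
      rw [Subgroup.lowerCentralSeries_succ, Subgroup.commutator_le]
      exact fun g hg h _ => commutator_mem_level (ih hg) (mem_level_one h)

instance (m : ℕ) : (level p n m).Characteristic := by
  cases m with
  | zero => rw [level_zero]; infer_instance
  | succ m => rw [level_succ_eq_lowerCentralSeries]; infer_instance

end UT

/-! ### Subgroups described by a superdiagonal -/

namespace UT

variable {p n : ℕ} [Fact p.Prime]

theorem coord_of_le {g : UT p n} {i : ℕ} (h : n ≤ i + 1) : coord g i = 0 :=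
  entry_of_not_lt (by omega)

def supportedOn (r : ℕ) (S : Set ℕ) : Subgroup (UT p n) where
  carrier := {g | g ∈ level p n r ∧ ∀ a ∉ S, entry g a (a + r) = 0}
  one_mem' := ⟨one_mem _, fun _ _ => entry_one _ _⟩
  mul_mem' {g h} hg hh := by
    refine ⟨mul_mem hg.1 hh.1, fun a ha => ?_⟩
    rcases Nat.eq_zero_or_pos r with rfl | hr
    · exact entry_eq_zero_of_lt_succ _ (by omega)
    · rw [entry_mul_of_lt hg.1 hh.1 (by omega), hg.2 a ha, hh.2 a ha, add_zero]
  inv_mem' {g} hg := by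
    refine ⟨inv_mem hg.1, fun a ha => ?_⟩
    rcases Nat.eq_zero_or_pos r with rfl | hr
    · exact entry_eq_zero_of_lt_succ _ (by omega)
    · rw [entry_inv hr hg.1, hg.2 a ha, neg_zero]

theorem mem_supportedOn {r : ℕ} {S : Set ℕ} {g : UT p n} :
    g ∈ supportedOn r S ↔ g ∈ level p n r ∧ ∀ a ∉ S, entry g a (a + r) = 0 :=
  Iff.rfl

theorem mem_supportedOn_one {S : Set ℕ} {g : UT p n} :
    g ∈ supportedOn 1 S ↔ ∀ a ∉ S, coord g a = 0 :=
  and_iff_right (mem_level_one g)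

theorem supportedOn_mono {r : ℕ} {S T : Set ℕ} (h : S ⊆ T) :
    supportedOn r S ≤ (supportedOn r T : Subgroup (UT p n)) :=
  fun _ hg => ⟨hg.1, fun a ha => hg.2 a fun haS => ha (h haS)⟩

theorem supportedOn_inf {r : ℕ} (S T : Set ℕ) :
    supportedOn r S ⊓ supportedOn r T = (supportedOn r (S ∩ T) : Subgroup (UT p n)) := by
  ext g
  simp only [Subgroup.mem_inf, mem_supportedOn, Set.mem_inter_iff, not_and_or]
  constructor
  · rintro ⟨⟨hg, hS⟩, -, hT⟩
    exact ⟨hg, fun a ha => ha.elim (hS a) (hT a)⟩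
  · rintro ⟨hg, h⟩
    exact ⟨⟨hg, fun a ha => h a (Or.inl ha)⟩, hg, fun a ha => h a (Or.inr ha)⟩

theorem root_mem_supportedOn_one {S : Set ℕ} {i : ℕ} (hi : i ∈ S) (t : ZMod p) :
    (root i (i + 1) t : UT p n) ∈ supportedOn 1 S := by
  by_cases hin : i + 1 < n
  · exact mem_supportedOn_one.mpr fun a ha => by
      rw [coord_root hin, if_neg (by rintro rfl; exact ha hi)]
  · rw [root_of_not_lt (by omega)]
    exact one_mem _

theorem level_two_le_supportedOn_one (S : Set ℕ) :
    level p n 2 ≤ supportedOn 1 S :=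
  fun _ hg => mem_supportedOn_one.mpr fun a _ => mem_level_two_iff.mp hg a

theorem supportedOn_one_sup (S T : Set ℕ) :
    supportedOn 1 S ⊔ supportedOn 1 T = (supportedOn 1 (S ∪ T) : Subgroup (UT p n)) := by
  refine le_antisymm (sup_le (supportedOn_mono Set.subset_union_left)
    (supportedOn_mono Set.subset_union_right)) fun g hg => ?_
  refine mem_of_root_mem le_rfl ((level_two_le_supportedOn_one S).trans le_sup_left)
    (mem_level_one g) fun a => ?_
  by_cases ha : a ∈ S ∪ T
  · rcases ha with ha | ha
    · exact Subgroup.mem_sup_left (root_mem_supportedOn_one ha _)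
    · exact Subgroup.mem_sup_right (root_mem_supportedOn_one ha _)
  · rw [show entry g a (a + 1) = 0 from mem_supportedOn_one.mp hg a ha, root_zero]
    exact one_mem _

theorem supportedOn_one_univ : supportedOn 1 Set.univ = (⊤ : Subgroup (UT p n)) :=
  eq_top_iff.mpr fun _ _ => mem_supportedOn_one.mpr fun _ ha => absurd trivial ha

theorem centralizerModulo_level {m : ℕ} (hm : 1 ≤ m) :
    Subgroup.centralizerModulo (level p n m) (level p n (m + 2)) =
      supportedOn 1 {i | n ≤ i + m + 1 ∧ i < m} := by
  ext g
  rw [Subgroup.mem_centralizerModulo, mem_supportedOn_one]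
  constructor
  · intro hg i hi
    have key : ∀ c, c + m < n → ⁅g, root c (c + m) 1⁆ ∈ level p n (m + 2) :=
      fun c _ => hg _ (root_mem_level le_rfl)
    rcases (by simp only [Set.mem_ofPred_eq] at hi; omega : i + m + 1 < n ∨ m ≤ i) with hi | hi
    · have e := (key (i + 1) (by omega)) i (i + 1 + m) (by omega)
      rw [entry_commutator (mem_level_one g) (root_mem_level le_rfl), entry_root (by omega)
        (by omega), entry_root (by omega) (by omega)] at e
      simpa [coord] using e
    · obtain ⟨c, rfl⟩ : ∃ c, i = c + m := ⟨i - m, by omega⟩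
      by_cases hc : c + m + 1 < n
      · have e := (key c (by omega)) c (c + 1 + m) (by omega)
        rw [entry_commutator (mem_level_one g) (root_mem_level le_rfl), entry_root (by omega)
          (by omega), entry_root (by omega) (by omega)] at e
        simpa [coord, show c + 1 + m = c + m + 1 by omega] using e
      · exact coord_of_le (by omega)
  · intro hg Y hY
    rw [show m + 2 = 1 + m + 1 by omega, mem_level_succ_iff]
    refine ⟨commutator_mem_level (mem_level_one g) hY, fun i => ?_⟩
    rw [← add_assoc, entry_commutator (mem_level_one g) hY]
    have h1 : coord g i * entry Y (i + 1) (i + 1 + m) = 0 := by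
      by_cases hi : n ≤ i + m + 1 ∧ i < m
      · rw [entry_of_not_lt (by omega), mul_zero]
      · rw [hg i hi, zero_mul]
    have h2 : coord g (i + m) = 0 := hg (i + m) (by simp)
    rw [show entry g (i + m) (i + 1 + m) = coord g (i + m) by simp [coord]; ring_nf, h2]
    unfold coord at h1
    simpa using h1

theorem centralizerModulo_supportedOn_one (S : Set ℕ) :
    Subgroup.centralizerModulo (supportedOn 1 S) (level p n 3) =
      supportedOn 1 {i | ∀ j ∈ S, j + 1 < n → i ≠ j + 1 ∧ i + 1 ≠ j} := by
  ext g
  rw [Subgroup.mem_centralizerModulo, mem_supportedOn_one]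
  constructor
  · intro hg i hi
    simp only [Set.mem_ofPred_eq, not_forall, not_and_or, not_not] at hi
    obtain ⟨j, hj, hjn, hij⟩ := hi
    have e := fun a => (mem_level_succ_iff.mp (hg _ (root_mem_supportedOn_one hj 1))).2 a
    rcases hij with rfl | rfl
    · simpa [entry_commutator_two, coord_root hjn] using e j
    · simpa [entry_commutator_two, coord_root hjn] using e i
  · intro hg Y hY
    refine mem_level_succ_iff.mpr ⟨commutator_mem_level (mem_level_one g) (mem_level_one Y),
      fun a => ?_⟩
    rw [entry_commutator_two]
    have h1 : coord g a * coord Y (a + 1) = 0 := by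
      by_cases ha : a + 1 ∈ S ∧ a + 2 < n
      · rw [hg a fun h => (h _ ha.1 ha.2).2 rfl, zero_mul]
      · rcases not_and_or.mp ha with ha | ha
        · rw [mem_supportedOn_one.mp hY _ ha, mul_zero]
        · rw [coord_of_le (g := Y) (i := a + 1) (by omega), mul_zero]
    have h2 : coord Y a * coord g (a + 1) = 0 := by
      by_cases ha : a ∈ S ∧ a + 1 < n
      · rw [hg (a + 1) fun h => (h _ ha.1 ha.2).1 rfl, mul_zero]
      · rcases not_and_or.mp ha with ha | ha
        · rw [mem_supportedOn_one.mp hY _ ha, zero_mul]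
        · rw [coord_of_le (g := g) (i := a + 1) (by omega), mul_zero]
    rw [h1, h2, sub_zero]

theorem commutator_supportedOn_one_level_two_sup_level_four (S : Set ℕ) :
    ⁅(supportedOn 1 S : Subgroup (UT p n)), level p n 2⁆ ⊔ level p n 4 =
      supportedOn 3 {a | a ∈ S ∨ a + 2 ∈ S} := by
  refine le_antisymm (sup_le ?_ fun g hg => ⟨level_antitone (by norm_num) hg,
    fun a _ => hg a _ (by omega)⟩) fun g hg => ?_
  · refine Subgroup.commutator_le.mpr fun u hu v hv =>
      ⟨commutator_mem_level (mem_level_one u) hv, fun a ha => ?_⟩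
    simp only [Set.mem_ofPred_eq, not_or] at ha
    rw [entry_commutator_three u hv, mem_supportedOn_one.mp hu a ha.1,
      mem_supportedOn_one.mp hu _ ha.2]
    ring
  refine mem_of_root_mem (r := 3) (by norm_num) le_sup_right hg.1 fun a => ?_
  by_cases hS : a ∈ S ∨ a + 2 ∈ S
  · by_cases ha : a + 3 < n
    · refine Subgroup.mem_sup_left ?_
      rw [← mul_one (entry g a (a + 3))]
      rcases hS with hS | hS
      · rw [← commutator_root_root (l := a + 1) (by omega) (by omega) ha]
        exact Subgroup.commutator_mem_commutator (root_mem_supportedOn_one hS _)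
          (root_mem_level (by omega))
      · rw [← commutator_root_root (l := a + 2) (by omega) (by omega) ha,
          Subgroup.commutator_comm]
        exact Subgroup.commutator_mem_commutator (root_mem_level (by omega))
          (root_mem_supportedOn_one hS _)
    · rw [root_of_not_lt (by omega)]
      exact one_mem _
  · rw [hg.2 a hS, root_zero]
    exact one_mem _

theorem commutator_commutator_mem_supportedOn_three_iff {A X : UT p n} {Z : Set ℕ} :
    ⁅A, ⁅A, X⁆⁆ ∈ supportedOn 3 Z ↔ ∀ a ∉ Z,
      coord A a * coord A (a + 1) * coord X (a + 2) -
        2 * coord A a * coord A (a + 2) * coord X (a + 1) +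
          coord A (a + 1) * coord A (a + 2) * coord X a = 0 := by
  have h3 : ⁅A, ⁅A, X⁆⁆ ∈ level p n (1 + (1 + 1)) :=
    commutator_mem_level (mem_level_one A)
      (commutator_mem_level (mem_level_one A) (mem_level_one X))
  rw [mem_supportedOn, and_iff_right h3]
  simp only [entry_commutator_commutator]

variable {b : ℕ} {A : UT p n}

theorem forall_commutator_commutator_mem_iff_mul_eq_zero (hb : b + 3 < n)
    (htwo : (2 : ZMod p) ≠ 0) :
    (∀ X ∈ (supportedOn 1 {b, b + 1, b + 2} : Subgroup (UT p n)),
        ⁅A, ⁅A, X⁆⁆ ∈ supportedOn 3 {a | a ≠ b}) ↔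
      coord A b * coord A (b + 1) = 0 ∧ coord A b * coord A (b + 2) = 0 ∧
        coord A (b + 1) * coord A (b + 2) = 0 := by
  simp only [commutator_commutator_mem_supportedOn_three_iff, Set.mem_ofPred_eq, not_not,
    forall_eq]
  constructor
  · intro h
    have e0 := h _ (root_mem_supportedOn_one (show b ∈ _ by simp) 1)
    have e1 := h _ (root_mem_supportedOn_one (show b + 1 ∈ _ by simp) 1)
    have e2 := h _ (root_mem_supportedOn_one (show b + 2 ∈ _ by simp) 1)
    simp [coord_root (show b + 1 < n by omega), coord_root (show b + 1 + 1 < n by omega),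
      coord_root (show b + 2 + 1 < n by omega)] at e0 e1 e2
    refine ⟨mul_eq_zero.mpr e2, mul_eq_zero.mpr ?_, mul_eq_zero.mpr e0⟩
    simpa [htwo] using e1
  · rintro ⟨h01, h02, h12⟩ X _
    linear_combination coord X (b + 2) * h01 - 2 * coord X (b + 1) * h02 + coord X b * h12

theorem forall_commutator_commutator_mem_iff_or (hb : b + 4 < n) (htwo : (2 : ZMod p) ≠ 0) :
    (∀ X ∈ (supportedOn 1 {b + 1, b + 2} : Subgroup (UT p n)),
        ⁅A, ⁅A, X⁆⁆ ∈ supportedOn 3 {a | a ≠ b ∧ a ≠ b + 1}) ↔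
      coord A (b + 1) = 0 ∧ coord A (b + 2) = 0 ∨ coord A b = 0 ∧ coord A (b + 3) = 0 := by
  simp only [commutator_commutator_mem_supportedOn_three_iff, Set.mem_ofPred_eq, not_and_or,
    not_not]
  constructor
  · intro h
    have e1 := h _ (root_mem_supportedOn_one (show b + 1 ∈ _ by simp) 1)
    have e2 := h _ (root_mem_supportedOn_one (show b + 2 ∈ _ by simp) 1)
    have e10 := e1 b (Or.inl rfl)
    have e11 := e1 (b + 1) (Or.inr rfl)
    have e20 := e2 b (Or.inl rfl)
    have e21 := e2 (b + 1) (Or.inr rfl)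
    simp [coord_root (show b + 1 + 1 < n by omega), coord_root (show b + 2 + 1 < n by omega),
      htwo] at e10 e11 e20 e21
    rw [show b + 1 + 2 = b + 3 from rfl] at e11 e21
    tauto
  · intro h X hX a ha
    have hXb : coord X b = 0 := mem_supportedOn_one.mp hX b (by simp)
    have hXb3 : coord X (b + 3) = 0 := mem_supportedOn_one.mp hX (b + 3) (by simp)
    rcases ha with rfl | rfl
    · rcases h with ⟨h1, h2⟩ | ⟨h0, -⟩
      · simp [h1, h2]
      · simp [h0, hXb]
    · rw [show b + 1 + 1 = b + 2 from rfl, show b + 1 + 2 = b + 3 from rfl]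
      rcases h with ⟨h1, h2⟩ | ⟨-, h3⟩
      · simp [h1, h2]
      · simp [h3, hXb3]

end UT

/-! ### The subgroups `H_k` -/

namespace UT

variable {p d : ℕ} [Fact p.Prime]

theorem coord_of_mem_Xroot {i : Fin d} {g : UT p (d + 1)} (hg : g ∈ Xroot p d i) {a : ℕ}
    (ha : a ≠ i) : coord g a = 0 := by
  obtain ⟨t, ht⟩ := hg
  by_cases h : a < d
  · rw [coord, entry, dif_pos ⟨by omega, by omega⟩, toMatrix, ht]
    simp [Fin.ext_iff, Ne.symm ha]
  · exact coord_of_le (by omega)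

theorem root_mem_Xroot {a : ℕ} (ha : a < d) (t : ZMod p) :
    (root a (a + 1) t : UT p (d + 1)) ∈ Xroot p d ⟨a, ha⟩ := by
  refine ⟨t, ?_⟩
  change toMatrix _ = _
  rw [toMatrix_root (by omega) (by omega), Matrix.smul_single, smul_eq_mul, mul_one]
  rfl

theorem Xroot_le_Hsub {k : ℕ} {i : Fin d} (hi : (i : ℕ) < k ∨ d - k ≤ i) :
    Xroot p d i ≤ Hsub p d k :=
  le_sup_of_le_right (le_iSup₂_of_le i hi le_rfl)

theorem Hsub_eq_supportedOn (k : ℕ) : Hsub p d k = supportedOn 1 {i | i < k ∨ d - k ≤ i} := by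
  refine le_antisymm (sup_le ?_ (iSup₂_le fun i hi g hg => ?_)) fun g hg => ?_
  · rw [← level_succ_eq_lowerCentralSeries]
    exact level_two_le_supportedOn_one _
  · exact mem_supportedOn_one.mpr fun a ha => coord_of_mem_Xroot hg (by rintro rfl; exact ha hi)
  · refine mem_of_root_mem le_rfl ?_ (mem_level_one g) fun a => ?_
    · rw [level_succ_eq_lowerCentralSeries]
      exact le_sup_left
    by_cases ha : a < d ∧ (a < k ∨ d - k ≤ a)
    · exact Xroot_le_Hsub (i := ⟨a, ha.1⟩) ha.2 (root_mem_Xroot ha.1 _)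
    · by_cases had : a < d
      · rw [show entry g a (a + 1) = 0 from mem_supportedOn_one.mp hg a (by simpa [had] using ha),
          root_zero]
        exact one_mem _
      · rw [root_of_not_lt (by omega)]
        exact one_mem _

theorem Hsub_eq_centralizerModulo {k m : ℕ} (hm : m + k + 1 = d) (hd : 2 * k + 4 ≤ d) :
    Hsub p d k = Subgroup.centralizerModulo
      (Subgroup.centralizerModulo (level p (d + 1) m) (level p (d + 1) (m + 2)))
      (level p (d + 1) 3) := by
  rw [centralizerModulo_level (by omega), centralizerModulo_supportedOn_one, Hsub_eq_supportedOn]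
  congr 1
  ext i
  simp only [Set.mem_ofPred_eq]
  refine ⟨fun hi j hj _ => by omega, fun h => ?_⟩
  by_contra hi
  rcases (by omega : i + 1 < m ∨ k + 2 ≤ i) with hi' | hi'
  · exact (h (i + 1) ⟨by omega, hi'⟩ (by omega)).2 rfl
  · exact (h (i - 1) ⟨by omega, by omega⟩ (by omega)).1 (by omega)

theorem Hsub_characteristic_of_two_mul_add_four_le {k : ℕ} (hd : 2 * k + 4 ≤ d) :
    (Hsub p d k).Characteristic := by
  rw [Hsub_eq_centralizerModulo (m := d - k - 1) (by omega) hd]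
  infer_instance

variable {b : ℕ}

theorem centralizerModulo_level_of_eq_two_mul_add_three (hd : d = 2 * b + 3) :
    Subgroup.centralizerModulo (level p (d + 1) (b + 3)) (level p (d + 1) (b + 5)) =
      supportedOn 1 {b, b + 1, b + 2} := by
  rw [centralizerModulo_level (by omega)]
  congr 1
  ext i
  simp only [Set.mem_ofPred_eq, Set.mem_insert_iff, Set.mem_singleton_iff]
  omega

theorem centralizerModulo_level_of_eq_two_mul_add_four (hd : d = 2 * b + 4) :
    Subgroup.centralizerModulo (level p (d + 1) (b + 3)) (level p (d + 1) (b + 5)) =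
      supportedOn 1 {b + 1, b + 2} := by
  rw [centralizerModulo_level (by omega)]
  congr 1
  ext i
  simp only [Set.mem_ofPred_eq, Set.mem_insert_iff, Set.mem_singleton_iff]
  omega

theorem centralizerModulo_centralizerModulo_level_of_eq_two_mul_add_three (hd : d = 2 * b + 3) :
    Subgroup.centralizerModulo
        (Subgroup.centralizerModulo (level p (d + 1) (b + 2)) (level p (d + 1) (b + 4)))
        (level p (d + 1) 3) =
      supportedOn 1 {i | i ≠ b ∧ i ≠ b + 2} := by
  rw [centralizerModulo_level (by omega), centralizerModulo_supportedOn_one]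
  congr 1
  ext i
  simp only [Set.mem_ofPred_eq]
  have hb : b + 1 ∈ {j | d + 1 ≤ j + (b + 2) + 1 ∧ j < b + 2} := ⟨by omega, by omega⟩
  exact ⟨fun h => ⟨fun hi => (h _ hb (by omega)).2 (by omega),
    fun hi => (h _ hb (by omega)).1 (by omega)⟩, fun hi j hj _ => by omega⟩

theorem Hsub_eq_inf_of_eq_two_mul_add_three (hd : d = 2 * b + 3) :
    Hsub p d b = Subgroup.centralizerModulo
        (Subgroup.centralizerModulo (level p (d + 1) (b + 2)) (level p (d + 1) (b + 4)))
        (level p (d + 1) 3) ⊓ Hsub p d (b + 1) := by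
  rw [centralizerModulo_centralizerModulo_level_of_eq_two_mul_add_three hd, Hsub_eq_supportedOn,
    Hsub_eq_supportedOn, supportedOn_inf]
  congr 1
  ext i
  simp only [Set.mem_ofPred_eq, Set.mem_inter_iff]
  omega

theorem Hsub_succ_eq_closure_of_eq_two_mul_add_three (hp : 3 ≤ p) (hd : d = 2 * b + 3) :
    Hsub p d (b + 1) = Subgroup.closure {A |
      (∀ X ∈ (supportedOn 1 {b, b + 1, b + 2} : Subgroup (UT p (d + 1))),
        ⁅A, ⁅A, X⁆⁆ ∈ supportedOn 3 {a | a ≠ b}) ∧ A ∉ supportedOn 1 {i | i ≠ b ∧ i ≠ b + 2}} := by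
  set T := {A : UT p (d + 1) |
    (∀ X ∈ (supportedOn 1 {b, b + 1, b + 2} : Subgroup (UT p (d + 1))),
      ⁅A, ⁅A, X⁆⁆ ∈ supportedOn 3 {a | a ≠ b}) ∧ A ∉ supportedOn 1 {i | i ≠ b ∧ i ≠ b + 2}}
  have hT : ∀ A, A ∈ T ↔
      (coord A b * coord A (b + 1) = 0 ∧ coord A b * coord A (b + 2) = 0 ∧
        coord A (b + 1) * coord A (b + 2) = 0) ∧ (coord A b ≠ 0 ∨ coord A (b + 2) ≠ 0) := by
    intro A
    rw [Set.mem_ofPred, mem_supportedOn_one,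
      forall_commutator_commutator_mem_iff_mul_eq_zero (by omega) (two_ne_zero_of_three_le hp)]
    simp only [Set.mem_ofPred_eq, not_and_or, not_not, or_imp, forall_and, forall_eq]
  have hH : ∀ A, A ∈ Hsub p d (b + 1) ↔ coord A (b + 1) = 0 := by
    intro A
    rw [Hsub_eq_supportedOn, mem_supportedOn_one]
    refine ⟨fun h => h _ (by simp only [Set.mem_ofPred_eq]; omega), fun h a ha => ?_⟩
    obtain rfl : a = b + 1 := by simp only [Set.mem_ofPred_eq] at ha; omega
    exact h
  have hroot : ∀ i, (i = b ∨ i = b + 2) → ∀ t,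
      (root i (i + 1) t : UT p (d + 1)) ∈ Subgroup.closure T := by
    intro i hi t
    by_cases ht : t = 0
    · rw [ht, root_zero]
      exact one_mem _
    refine Subgroup.subset_closure ((hT _).mpr ?_)
    simp only [coord_root (show i + 1 < d + 1 by omega)]
    rcases hi with rfl | rfl <;> simp [ht]
  refine le_antisymm (fun A hA => ?_) ((Subgroup.closure_le _).mpr fun A hA => ?_)
  · -- moving the coordinates of `A` at `b` and `b + 2` to `1` and `0` lands in the generating set
    have hB : A * root (b + 2) (b + 3) (-coord A (b + 2)) * root b (b + 1) (1 - coord A b) ∈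
        T := by
      refine (hT _).mpr ?_
      simp only [coord_mul, coord_root (show b + 2 + 1 < d + 1 by omega),
        coord_root (show b + 1 < d + 1 by omega), (hH A).mp hA]
      simp
    have : _ ∈ Subgroup.closure T := Subgroup.subset_closure hB
    rwa [mul_mem_cancel_right (hroot b (Or.inl rfl) _),
      mul_mem_cancel_right (hroot (b + 2) (Or.inr rfl) _)] at this
  · rw [SetLike.mem_coe, hH]
    obtain ⟨⟨h01, -, h12⟩, h⟩ := (hT A).mp hA
    rcases h with h | h
    · exact (mul_eq_zero.mp h01).resolve_left h
    · exact (mul_eq_zero.mp h12).resolve_right h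

theorem Hsub_succ_characteristic_of_eq_two_mul_add_three (hp : 3 ≤ p) (hd : d = 2 * b + 3) :
    (Hsub p d (b + 1)).Characteristic := by
  have hL : (supportedOn 3 {a | a ≠ b} : Subgroup (UT p (d + 1))) =
      ⁅Subgroup.centralizerModulo
        (Subgroup.centralizerModulo (level p (d + 1) (b + 2)) (level p (d + 1) (b + 4)))
        (level p (d + 1) 3), level p (d + 1) 2⁆ ⊔ level p (d + 1) 4 := by
    rw [centralizerModulo_centralizerModulo_level_of_eq_two_mul_add_three hd,
      commutator_supportedOn_one_level_two_sup_level_four]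
    congr 1
    ext a
    simp only [Set.mem_ofPred_eq]
    omega
  rw [Hsub_succ_eq_closure_of_eq_two_mul_add_three hp hd, hL,
    ← centralizerModulo_level_of_eq_two_mul_add_three hd,
    ← centralizerModulo_centralizerModulo_level_of_eq_two_mul_add_three hd]
  exact Subgroup.closure_characteristic fun φ A hA =>
    ⟨Subgroup.forall_word_mem_apply (fun a x => ⁅a, ⁅a, x⁆⁆) φ
      (fun _ _ => by simp only [map_commutatorElement]) hA.1,
      (Subgroup.Characteristic.apply_mem_iff φ).not.mpr hA.2⟩

theorem forall_commutator_commutator_mem_iff_of_eq_two_mul_add_four (hp : 3 ≤ p)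
    (hd : d = 2 * b + 4) (A : UT p (d + 1)) :
    (∀ X ∈ (supportedOn 1 {b + 1, b + 2} : Subgroup (UT p (d + 1))),
        ⁅A, ⁅A, X⁆⁆ ∈ supportedOn 3 {a | a ≠ b ∧ a ≠ b + 1}) ↔
      A ∈ Hsub p d (b + 1) ∨ A ∈ supportedOn 1 {i | i ≠ b ∧ i ≠ b + 3} := by
  rw [forall_commutator_commutator_mem_iff_or (by omega) (two_ne_zero_of_three_le hp),
    Hsub_eq_supportedOn, mem_supportedOn_one, mem_supportedOn_one]
  refine or_congr ⟨fun ⟨h1, h2⟩ a ha => ?_, fun h => ⟨h _ ?_, h _ ?_⟩⟩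
    ⟨fun ⟨h0, h3⟩ a ha => ?_, fun h => ⟨h _ ?_, h _ ?_⟩⟩
  · obtain rfl | rfl : a = b + 1 ∨ a = b + 2 := by simp only [Set.mem_ofPred_eq] at ha; omega
    exacts [h1, h2]
  any_goals simp only [Set.mem_ofPred_eq]; omega
  obtain rfl | rfl : a = b ∨ a = b + 3 := by simp only [Set.mem_ofPred_eq] at ha; omega
  exacts [h0, h3]

theorem Hsub_succ_characteristic_of_eq_two_mul_add_four (hp : 3 ≤ p) (hd : d = 2 * b + 4) :
    (Hsub p d (b + 1)).Characteristic := by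
  have := Hsub_characteristic_of_two_mul_add_four_le (p := p) (d := d) (k := b) (by omega)
  have hK := centralizerModulo_level_of_eq_two_mul_add_four (p := p) hd
  have hL : (supportedOn 3 {a | a ≠ b ∧ a ≠ b + 1} : Subgroup (UT p (d + 1))) =
      ⁅Hsub p d b, level p (d + 1) 2⁆ ⊔ level p (d + 1) 4 := by
    rw [Hsub_eq_supportedOn b, commutator_supportedOn_one_level_two_sup_level_four]
    congr 1
    ext a
    simp only [Set.mem_ofPred_eq]
    omega
  set K := Subgroup.centralizerModulo (level p (d + 1) (b + 3)) (level p (d + 1) (b + 5))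
  set Q : Subgroup (UT p (d + 1)) := supportedOn 1 {i | i ≠ b ∧ i ≠ b + 3}
  have hHK : Hsub p d (b + 1) ⊔ K = ⊤ := by
    rw [hK, Hsub_eq_supportedOn, supportedOn_one_sup, ← supportedOn_one_univ]
    congr 1
    ext i
    simp only [Set.mem_union, Set.mem_ofPred_eq, Set.mem_insert_iff, Set.mem_singleton_iff,
      Set.mem_univ, iff_true]
    omega
  have hKQ : K ≤ Q := by
    rw [hK]
    refine supportedOn_mono fun i hi => ?_
    simp only [Set.mem_insert_iff, Set.mem_singleton_iff] at hi
    simp only [Set.mem_ofPred_eq]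
    omega
  have hQ : Q ≠ ⊤ := fun hQ => by
    have := mem_supportedOn_one.mp (hQ.ge (Subgroup.mem_top (root b (b + 1) 1))) b (by simp)
    simp [coord_root (show b + 1 < d + 1 by omega)] at this
  have hE := forall_commutator_commutator_mem_iff_of_eq_two_mul_add_four hp hd
  rw [← hK, hL] at hE
  refine Subgroup.characteristic_iff_map_le.mpr fun φ =>
    Subgroup.map_le_of_map_subset_union hHK hKQ hQ φ ?_
  rintro _ ⟨A, hA, rfl⟩
  exact (hE _).mp (Subgroup.forall_word_mem_apply (fun a x => ⁅a, ⁅a, x⁆⁆) φ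
    (fun _ _ => by simp only [map_commutatorElement]) ((hE A).mpr (Or.inl hA)))

end UT

theorem Hsub_characteristic_general (p d : ℕ) [Fact p.Prime] (hp : 3 ≤ p) :
    ∀ k : ℕ, 1 ≤ k → k ≤ (d + 1) / 2 - 1 → (Hsub p d k).Characteristic := by
  intro k hk1 hk2
  obtain ⟨b, rfl⟩ : ∃ b, k = b + 1 := ⟨k - 1, by omega⟩
  rcases (by omega : d = 2 * b + 3 ∨ d = 2 * b + 4 ∨ d = 2 * b + 5 ∨ 2 * (b + 1) + 4 ≤ d)
    with hd | hd | hd | hd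
  · exact UT.Hsub_succ_characteristic_of_eq_two_mul_add_three hp hd
  · exact UT.Hsub_succ_characteristic_of_eq_two_mul_add_four hp hd
  · have := UT.Hsub_succ_characteristic_of_eq_two_mul_add_three (b := b + 1) hp (by omega)
    rw [UT.Hsub_eq_inf_of_eq_two_mul_add_three (by omega)]
    infer_instance
  · exact UT.Hsub_characteristic_of_two_mul_add_four_le hd

/-- Let `p ≥ 3` be a prime, `d ≥ 3`, and let `U = UT(d+1, ℤ/pℤ)`.
With `m = ⌈d/2⌉`, for every `1 ≤ k ≤ m − 1` the subgroup `H_k` generated by `γ₂(U)` and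
the root subgroups `X_1, …, X_k, X_{d−k+1}, …, X_d` is a characteristic subgroup of `U`. -/
theorem Hsub_characteristic (p d : ℕ) [Fact p.Prime] (hp : 3 ≤ p) (hd : 3 ≤ d) :
    ∀ k : ℕ, 1 ≤ k → k ≤ (d + 1) / 2 - 1 → (Hsub p d k).Characteristic :=
  Hsub_characteristic_general p d hp
end
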